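/- (Corollary 1) Under the setup of Theorem 1, let Y₀ = { x ∈ ℝⁿ : Σ_{m=1}^{M} ‖x − y₀^m‖₂ ≤ R and x ≠ y₀^m for all m }, and suppose the hypotheses of Theorem 1 (the discrete contraction property of rollouts and the triangle inequality ℓ(ŷ(x), y^m) ≤ ℓ(ŷ(x), ŷ^m) + ℓ(ŷ^m, y^m) for every m) hold for every x ∈ Y₀. Let μ be any probability measure on ℝⁿ with μ(Y₀) = 1, and suppose the loss function x ↦ L(x) = Σ_{m=1}^{M} λ_m(x) ℓ(ŷ(x), y^m) is μ-integrable. Then the true (expected) loss satisfies ∫ L dμ ≤ max_{m ∈ {1,…,M}} ℓ(ŷ^m, y^m) + α² R² (e^{−2γ} − 1) / (H · M · (e^{−2γ/H} − 1)). -/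

import Mathlib

/-!
The weights `λ_m(x)` are proportional to `‖x - y₀^m‖⁻²`, so `λ_m(x) ‖x - y₀^m‖²` does not depend
on `m`; by Cauchy–Schwarz (Titu's lemma) `∑_m λ_m(x) ‖x - y₀^m‖² ≤ (∑_m ‖x - y₀^m‖²) / M ≤ R² / M`.
Splitting each loss by the triangle inequality, the contraction property bounds the rollout terms
by `α² / H ∑_i e^{-2γi/H} ‖x - y₀^m‖²` and the expert terms are a convex combination, hence at most
their maximum. Summing the geometric series gives the constant of the corollary pointwise on `Y₀`,
and integrating against a probability measure concentrated on `Y₀` preserves the bound.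
-/

open MeasureTheory

/-- Mean squared error between two length-`H` trajectories in `ℝⁿ`. -/
noncomputable def mse {n H : ℕ} (a b : Fin H → EuclideanSpace ℝ (Fin n)) : ℝ :=
  (1 / H : ℝ) * ∑ i, ‖a i - b i‖ ^ 2

/-- Weights `λ_m(x) = (‖x − y₀^m‖₂²)⁻¹ / Σ_{m'} (‖x − y₀^{m'}‖₂²)⁻¹`. -/
noncomputable def lam {n M : ℕ} (y0 : Fin M → EuclideanSpace ℝ (Fin n))
    (x : EuclideanSpace ℝ (Fin n)) (m : Fin M) : ℝ :=
  (‖x - y0 m‖ ^ 2)⁻¹ / ∑ m', (‖x - y0 m'‖ ^ 2)⁻¹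

open Finset

section Weights

variable {n M : ℕ} {y0 : Fin M → EuclideanSpace ℝ (Fin n)} {x : EuclideanSpace ℝ (Fin n)}

lemma lam_nonneg (m : Fin M) : 0 ≤ lam y0 x m := by
  unfold lam
  positivity

lemma sq_norm_sub_pos {m : Fin M} (hx : x ≠ y0 m) : 0 < ‖x - y0 m‖ ^ 2 :=
  pow_pos (norm_pos_iff.2 (sub_ne_zero.2 hx)) 2

lemma sum_inv_sq_norm_sub_pos (hM : 0 < M) (hx : ∀ m, x ≠ y0 m) :
    0 < ∑ m, (‖x - y0 m‖ ^ 2)⁻¹ :=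
  sum_pos (fun m _ => inv_pos.2 (sq_norm_sub_pos (hx m))) ⟨⟨0, hM⟩, mem_univ _⟩

lemma sum_lam_eq_one (hM : 0 < M) (hx : ∀ m, x ≠ y0 m) : ∑ m, lam y0 x m = 1 := by
  simp only [lam, ← sum_div]
  exact div_self (sum_inv_sq_norm_sub_pos hM hx).ne'

lemma lam_mul_sq_norm_sub {m : Fin M} (hx : x ≠ y0 m) :
    lam y0 x m * ‖x - y0 m‖ ^ 2 = (∑ m', (‖x - y0 m'‖ ^ 2)⁻¹)⁻¹ := by
  rw [lam, div_mul_eq_mul_div, inv_mul_cancel₀ (sq_norm_sub_pos hx).ne', one_div]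

lemma sum_lam_mul_sq_norm_sub_le (hM : 0 < M) (hx : ∀ m, x ≠ y0 m) :
    ∑ m, lam y0 x m * ‖x - y0 m‖ ^ 2 ≤ (∑ m, ‖x - y0 m‖ ^ 2) / M := by
  have titu : (M : ℝ) ^ 2 / ∑ m, (‖x - y0 m‖ ^ 2)⁻¹ ≤ ∑ m, ‖x - y0 m‖ ^ 2 := by
    simpa using sq_sum_div_le_sum_sq_div univ (fun _ : Fin M => (1 : ℝ))
      (fun m _ => inv_pos.2 (sq_norm_sub_pos (hx m)))
  calc ∑ m, lam y0 x m * ‖x - y0 m‖ ^ 2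
      = (M : ℝ) * (∑ m, (‖x - y0 m‖ ^ 2)⁻¹)⁻¹ := by
        simp [lam_mul_sq_norm_sub (hx _)]
    _ = (M : ℝ) ^ 2 / (∑ m, (‖x - y0 m‖ ^ 2)⁻¹) / M := by
        field_simp
    _ ≤ (∑ m, ‖x - y0 m‖ ^ 2) / M := by gcongr

end Weights

lemma sum_mul_le_ciSup {ι : Type*} [Fintype ι] {w f : ι → ℝ} (hw : ∀ i, 0 ≤ w i)
    (hw1 : ∑ i, w i = 1) : ∑ i, w i * f i ≤ ⨆ i, f i :=
  calc ∑ i, w i * f i ≤ ∑ i, w i * ⨆ j, f j := by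
        gcongr with i
        · exact hw i
        · exact le_ciSup (Set.finite_range f).bddAbove i
    _ = ⨆ i, f i := by rw [← sum_mul, hw1, one_mul]

section Mse

variable {n H : ℕ} {a b : Fin H → EuclideanSpace ℝ (Fin n)}

lemma mse_le_of_norm_sub_le {c : Fin H → ℝ} (h : ∀ i, ‖a i - b i‖ ≤ c i) :
    mse a b ≤ 1 / H * ∑ i, c i ^ 2 := by
  unfold mse
  gcongr with i
  exact h i

lemma mse_le_of_exp_contraction {α γ d : ℝ}
    (h : ∀ i : Fin H, ‖a i - b i‖ ≤ α * Real.exp (-γ * (i : ℕ) / H) * d) :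
    mse a b ≤ α ^ 2 / H * (∑ i : Fin H, Real.exp (-2 * γ * (i : ℕ) / H)) * d ^ 2 := by
  refine (mse_le_of_norm_sub_le h).trans_eq ?_
  simp only [mul_pow, ← Real.exp_nat_mul, mul_sum, sum_mul]
  refine sum_congr rfl fun i _ => ?_
  ring_nf

end Mse

lemma sum_exp_mul_div_eq {H : ℕ} (hH : 0 < H) {c : ℝ} (hc : c ≠ 0) :
    ∑ i : Fin H, Real.exp (c * (i : ℕ) / H) = (Real.exp c - 1) / (Real.exp (c / H) - 1) := by
  have hHne : (H : ℝ) ≠ 0 := by exact_mod_cast hH.ne'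
  have hr : Real.exp (c / H) ≠ 1 := by
    rw [Ne, Real.exp_eq_one_iff]
    exact div_ne_zero hc hHne
  have hpow : ∀ k : ℕ, Real.exp (c * k / H) = Real.exp (c / H) ^ k := fun k => by
    rw [← Real.exp_nat_mul]
    ring_nf
  rw [Fin.sum_univ_eq_sum_range (fun k => Real.exp (c * k / H)), sum_congr rfl fun k _ => hpow k,
    geom_sum_eq hr, ← hpow, mul_div_cancel_right₀ c hHne]

/-- Theorem 1 of the paper, with the contraction property in the form
`ℓ(ŷ(x), ŷ^m) ≤ K ‖x - y₀^m‖²`. -/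
theorem sum_lam_mul_mse_le {n H M : ℕ} (hM : 0 < M) {y0 : Fin M → EuclideanSpace ℝ (Fin n)}
    {y b : Fin M → Fin H → EuclideanSpace ℝ (Fin n)} {a : Fin H → EuclideanSpace ℝ (Fin n)}
    {K R : ℝ} (hK : 0 ≤ K) {x : EuclideanSpace ℝ (Fin n)}
    (hxR : ∑ m, ‖x - y0 m‖ ≤ R) (hx : ∀ m, x ≠ y0 m)
    (hcontr : ∀ m, mse a (b m) ≤ K * ‖x - y0 m‖ ^ 2)
    (htri : ∀ m, mse a (y m) ≤ mse a (b m) + mse (b m) (y m)) :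
    ∑ m, lam y0 x m * mse a (y m) ≤ (⨆ m, mse (b m) (y m)) + K * R ^ 2 / M := by
  have hsq : ∑ m, ‖x - y0 m‖ ^ 2 ≤ R ^ 2 :=
    (sum_sq_le_sq_sum_of_nonneg fun m _ => norm_nonneg _).trans
      (pow_le_pow_left₀ (sum_nonneg fun m _ => norm_nonneg _) hxR 2)
  have hrollout : ∑ m, lam y0 x m * mse a (b m) ≤ K * R ^ 2 / M :=
    calc ∑ m, lam y0 x m * mse a (b m) ≤ ∑ m, lam y0 x m * (K * ‖x - y0 m‖ ^ 2) := by
          gcongr with m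
          · exact lam_nonneg m
          · exact hcontr m
      _ = K * ∑ m, lam y0 x m * ‖x - y0 m‖ ^ 2 := by
          rw [mul_sum]
          exact sum_congr rfl fun m _ => by ring
      _ ≤ K * ((∑ m, ‖x - y0 m‖ ^ 2) / M) := by
          gcongr
          exact sum_lam_mul_sq_norm_sub_le hM hx
      _ ≤ K * R ^ 2 / M := by
          rw [mul_div_assoc]
          gcongr
  calc ∑ m, lam y0 x m * mse a (y m)
      ≤ ∑ m, lam y0 x m * (mse a (b m) + mse (b m) (y m)) := by
        gcongr with m
        · exact lam_nonneg m
        · exact htri m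
    _ = ∑ m, lam y0 x m * mse a (b m) + ∑ m, lam y0 x m * mse (b m) (y m) := by
        simp only [mul_add, sum_add_distrib]
    _ ≤ K * R ^ 2 / M + ⨆ m, mse (b m) (y m) :=
        add_le_add hrollout (sum_mul_le_ciSup lam_nonneg (sum_lam_eq_one hM hx))
    _ = (⨆ m, mse (b m) (y m)) + K * R ^ 2 / M := add_comm _ _

lemma integral_le_of_forall_mem_le {α : Type*} [MeasurableSpace α] {μ : Measure α}
    [IsProbabilityMeasure μ] {s : Set α} (hs : MeasurableSet s) (hμs : μ s = 1) {f : α → ℝ}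
    (hf : Integrable f μ) {C : ℝ} (h : ∀ x ∈ s, f x ≤ C) : ∫ x, f x ∂μ ≤ C := by
  have hae : ∀ᵐ x ∂μ, x ∈ s := (prob_compl_eq_zero_iff hs).2 hμs
  calc ∫ x, f x ∂μ ≤ ∫ _, C ∂μ := integral_mono_ae hf (integrable_const C) (hae.mono h)
    _ = C := by simp

theorem true_loss_upper_bound_general {n : ℕ} (H M : ℕ) (hH : 0 < H) (hM : 0 < M)
    (α γ R : ℝ) (hγ : 0 < γ)
    (y : Fin M → Fin H → EuclideanSpace ℝ (Fin n))
    (y0 : Fin M → EuclideanSpace ℝ (Fin n))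
    (rollout : EuclideanSpace ℝ (Fin n) → Fin H → EuclideanSpace ℝ (Fin n))
    (hcontr : ∀ x x' : EuclideanSpace ℝ (Fin n), ∀ i : Fin H,
      ‖rollout x i - rollout x' i‖ ≤ α * Real.exp (-γ * (i : ℕ) / H) * ‖x - x'‖)
    (Y0 : Set (EuclideanSpace ℝ (Fin n)))
    (hY0 : Y0 = {x | (∑ m, ‖x - y0 m‖) ≤ R ∧ ∀ m, x ≠ y0 m})
    (htri : ∀ x ∈ Y0, ∀ m : Fin M,
      mse (rollout x) (y m) ≤
        mse (rollout x) (rollout (y0 m)) + mse (rollout (y0 m)) (y m))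
    (μ : Measure (EuclideanSpace ℝ (Fin n))) [IsProbabilityMeasure μ]
    (hμ : μ Y0 = 1)
    (L : EuclideanSpace ℝ (Fin n) → ℝ)
    (hL : L = fun x => ∑ m, lam y0 x m * mse (rollout x) (y m))
    (hint : Integrable L μ) :
    ∫ x, L x ∂μ ≤
      (⨆ m : Fin M, mse (rollout (y0 m)) (y m)) +
        α ^ 2 * R ^ 2 * (Real.exp (-2 * γ) - 1) /
          (H * M * (Real.exp (-2 * γ / H) - 1)) := by
  have hmeas : MeasurableSet Y0 := by
    rw [hY0, Set.ofPred_and, Set.ofPred_forall]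
    exact (measurableSet_le (by fun_prop) measurable_const).inter
      (MeasurableSet.iInter fun m => (measurableSet_singleton (y0 m)).compl)
  have hpointwise : ∀ x ∈ Y0, L x ≤ (⨆ m, mse (rollout (y0 m)) (y m)) +
      α ^ 2 / H * (∑ i : Fin H, Real.exp (-2 * γ * (i : ℕ) / H)) * R ^ 2 / M := by
    intro x hx
    obtain ⟨hxR, hxne⟩ : (∑ m, ‖x - y0 m‖) ≤ R ∧ ∀ m, x ≠ y0 m := by rwa [hY0] at hx
    rw [hL]
    exact sum_lam_mul_mse_le (b := fun m => rollout (y0 m)) hM (by positivity) hxR hxne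
      (fun m => mse_le_of_exp_contraction (hcontr x (y0 m))) (htri x hx)
  refine (integral_le_of_forall_mem_le hmeas hμ hint hpointwise).trans_eq ?_
  rw [sum_exp_mul_div_eq hH (by linarith : -2 * γ ≠ 0)]
  field_simp

/-- **Corollary 1.** Under the setup of Theorem 1, for any probability
measure `μ` concentrated on the multi-focal ellipse region `Y₀`, if the loss
`L(x) = Σ_m λ_m(x) ℓ(ŷ(x), y^m)` is `μ`-integrable, then the true (expected) loss
satisfies `∫ L dμ ≤ max_m ℓ(ŷ^m, y^m) + α² R² (e^{−2γ} − 1)/(H M (e^{−2γ/H} − 1))`. -/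
theorem true_loss_upper_bound {n : ℕ} (H M : ℕ) (hH : 0 < H) (hM : 0 < M)
    (α γ R : ℝ) (hα : 0 < α) (hγ : 0 < γ) (hR : 0 < R)
    (y : Fin M → Fin H → EuclideanSpace ℝ (Fin n))
    (y0 : Fin M → EuclideanSpace ℝ (Fin n))
    (hy0 : ∀ m, y0 m = y m ⟨0, hH⟩)
    (rollout : EuclideanSpace ℝ (Fin n) → Fin H → EuclideanSpace ℝ (Fin n))
    (hcontr : ∀ x x' : EuclideanSpace ℝ (Fin n), ∀ i : Fin H,
      ‖rollout x i - rollout x' i‖ ≤ α * Real.exp (-γ * (i : ℕ) / H) * ‖x - x'‖)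
    (Y0 : Set (EuclideanSpace ℝ (Fin n)))
    (hY0 : Y0 = {x | (∑ m, ‖x - y0 m‖) ≤ R ∧ ∀ m, x ≠ y0 m})
    (htri : ∀ x ∈ Y0, ∀ m : Fin M,
      mse (rollout x) (y m) ≤
        mse (rollout x) (rollout (y0 m)) + mse (rollout (y0 m)) (y m))
    (μ : Measure (EuclideanSpace ℝ (Fin n))) [IsProbabilityMeasure μ]
    (hμ : μ Y0 = 1)
    (L : EuclideanSpace ℝ (Fin n) → ℝ)
    (hL : L = fun x => ∑ m, lam y0 x m * mse (rollout x) (y m))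
    (hint : Integrable L μ) :
    ∫ x, L x ∂μ ≤
      (⨆ m : Fin M, mse (rollout (y0 m)) (y m)) +
        α ^ 2 * R ^ 2 * (Real.exp (-2 * γ) - 1) /
          (H * M * (Real.exp (-2 * γ / H) - 1)) :=
  true_loss_upper_bound_general H M hH hM α γ R hγ y y0 rollout hcontr Y0 hY0 htri μ hμ L hL hint
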